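/- Let S = k[y₀,…,y₄] and let f₁ = y₀²y₁ − y₁y₃² + y₀y₃y₄, f₂ = y₀y₁² + y₁y₂y₃ − y₀y₃², f₃ = y₁³ − y₁y₂² + y₀y₂y₃ − y₁y₃² + y₁y₂y₄, f₅ = y₀y₁y₂ + y₁²y₃ − y₃³ + y₂y₃y₄, f₆ = y₀²y₃ − y₃³ + y₀y₁y₄ + y₂y₃y₄. Then the element γ = (y₁∧y₂) ⊗ f₁ + (−y₀∧y₂ + y₁∧y₃) ⊗ f₂ − (y₀∧y₃) ⊗ f₃ + (y₀∧y₁ − y₂∧y₃) ⊗ f₅ + (y₂∧y₃) ⊗ f₆ ∈ ⋀²S₁ ⊗ S₃ is annihilated by the Koszul differential δ(a∧b ⊗ f) = a ⊗ bf − b ⊗ af mapping to S₁ ⊗ S₄. -/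

import Mathlib

open MvPolynomial TensorProduct

/-- The Koszul differential applied to `y_a ∧ y_b ⊗ f`, namely `a ⊗ bf − b ⊗ af`. -/
noncomputable def dK2 (k : Type*) [Field k] (a b : Fin 5) (f : MvPolynomial (Fin 5) k) :
    MvPolynomial (Fin 5) k ⊗[k] MvPolynomial (Fin 5) k :=
  X a ⊗ₜ[k] (X b * f) - X b ⊗ₜ[k] (X a * f)

/-!
Sorting `δγ` by the first tensor factor writes it as `∑ᵢ yᵢ ⊗ sᵢ`, where each `sᵢ` is a
combination of the cubics with linear coefficients. The four combinations `s₀, …, s₃` are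
linear syzygies of the projected Veronese surface, so they vanish identically in `S₄`.
-/

section KoszulCycle

variable {k : Type*} [Field k] {f1 f2 f3 f5 f6 : MvPolynomial (Fin 5) k}

theorem dK2_combination_eq_sum_tmul :
    dK2 k 1 2 f1 - dK2 k 0 2 f2 + dK2 k 1 3 f2 - dK2 k 0 3 f3
      + dK2 k 0 1 f5 - dK2 k 2 3 f5 + dK2 k 2 3 f6
      = X 0 ⊗ₜ[k] (X 1 * f5 - X 2 * f2 - X 3 * f3)
      + X 1 ⊗ₜ[k] (X 2 * f1 + X 3 * f2 - X 0 * f5)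
      + X 2 ⊗ₜ[k] (X 0 * f2 - X 1 * f1 - X 3 * f5 + X 3 * f6)
      + X 3 ⊗ₜ[k] (X 0 * f3 - X 1 * f2 + X 2 * f5 - X 2 * f6) := by
  simp only [dK2, tmul_sub, tmul_add]
  abel

theorem dK2_combination_eq_zero_of_syzygies
    (h0 : X 1 * f5 - X 2 * f2 - X 3 * f3 = 0)
    (h1 : X 2 * f1 + X 3 * f2 - X 0 * f5 = 0)
    (h2 : X 0 * f2 - X 1 * f1 - X 3 * f5 + X 3 * f6 = 0)
    (h3 : X 0 * f3 - X 1 * f2 + X 2 * f5 - X 2 * f6 = 0) :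
    dK2 k 1 2 f1 - dK2 k 0 2 f2 + dK2 k 1 3 f2 - dK2 k 0 3 f3
      + dK2 k 0 1 f5 - dK2 k 2 3 f5 + dK2 k 2 3 f6 = 0 := by
  rw [dK2_combination_eq_sum_tmul, h0, h1, h2, h3]
  simp only [tmul_zero, add_zero]

end KoszulCycle

theorem veronese_koszul_cycle (k : Type*) [Field k]
    (f1 f2 f3 f5 f6 : MvPolynomial (Fin 5) k)
    (hf1 : f1 = X 0 ^ 2 * X 1 - X 1 * X 3 ^ 2 + X 0 * X 3 * X 4)
    (hf2 : f2 = X 0 * X 1 ^ 2 + X 1 * X 2 * X 3 - X 0 * X 3 ^ 2)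
    (hf3 : f3 = X 1 ^ 3 - X 1 * X 2 ^ 2 + X 0 * X 2 * X 3 - X 1 * X 3 ^ 2 + X 1 * X 2 * X 4)
    (hf5 : f5 = X 0 * X 1 * X 2 + X 1 ^ 2 * X 3 - X 3 ^ 3 + X 2 * X 3 * X 4)
    (hf6 : f6 = X 0 ^ 2 * X 3 - X 3 ^ 3 + X 0 * X 1 * X 4 + X 2 * X 3 * X 4) :
    dK2 k 1 2 f1 - dK2 k 0 2 f2 + dK2 k 1 3 f2 - dK2 k 0 3 f3
      + dK2 k 0 1 f5 - dK2 k 2 3 f5 + dK2 k 2 3 f6 = 0 := by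
  subst hf1 hf2 hf3 hf5 hf6
  apply dK2_combination_eq_zero_of_syzygies <;> ring
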